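/- For the iterated adjoint action of the Leibniz bracket [(X,α),(Y,β)] = ([X,Y], L_X β − i_Y dα) (time-independent model), one has ad^{n+1}_{(X,α)}(Y,β) = (ad^{n+1}_X Y, L_X^{n+1} β − Σ_{k=0}^{n} C(n+1,k) i_{ad_X^k Y} d L_X^{n−k} α) for all n ≥ 0, where ad_X Y = [X,Y] and C(n+1,k) is the binomial coefficient. -/
import Mathlib


/-- The Dorfman-type Leibniz bracket `[(X,α),(Y,β)] = ([X,Y], L_X β − i_Y dα)`. -/
def dor {V Ω1 Ω2 : Type*} [AddCommGroup V] [Module ℝ V]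
    [AddCommGroup Ω1] [Module ℝ Ω1] [AddCommGroup Ω2] [Module ℝ Ω2]
    (br : V →ₗ[ℝ] V →ₗ[ℝ] V) (L1 : V →ₗ[ℝ] Ω1 →ₗ[ℝ] Ω1)
    (ι : V →ₗ[ℝ] Ω2 →ₗ[ℝ] Ω1) (d : Ω1 →ₗ[ℝ] Ω2)
    (a b : V × Ω1) : V × Ω1 :=
  (br a.1 b.1, L1 a.1 b.2 - ι b.1 (d a.2))

set_option maxHeartbeats 1000000 in
/-- Formula for the iterated adjoint action:
`ad^{n+1}_{(X,α)}(Y,β) = (ad^{n+1}_X Y, L_X^{n+1} β − Σ_{k=0}^{n} C(n+1,k)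
  i_{ad_X^k Y} d L_X^{n−k} α)`, given the Cartan identities
`L_X i_Z − i_Z L_X = i_{[X,Z]}` and `L_X d = d L_X`. -/
theorem stmt15 {V Ω1 Ω2 : Type*} [AddCommGroup V] [Module ℝ V]
    [AddCommGroup Ω1] [Module ℝ Ω1] [AddCommGroup Ω2] [Module ℝ Ω2]
    (br : V →ₗ[ℝ] V →ₗ[ℝ] V) (L1 : V →ₗ[ℝ] Ω1 →ₗ[ℝ] Ω1) (L2 : V →ₗ[ℝ] Ω2 →ₗ[ℝ] Ω2)
    (ι : V →ₗ[ℝ] Ω2 →ₗ[ℝ] Ω1) (d : Ω1 →ₗ[ℝ] Ω2)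
    (hLι : ∀ (X Z : V) (ω : Ω2), L1 X (ι Z ω) - ι Z (L2 X ω) = ι (br X Z) ω)
    (hdL : ∀ (X : V) (α : Ω1), d (L1 X α) = L2 X (d α)) :
    ∀ (n : ℕ) (X Y : V) (α β : Ω1),
      (fun b => dor br L1 ι d (X, α) b)^[n + 1] (Y, β)
        = ((br X ^ (n + 1)) Y,
           (L1 X ^ (n + 1)) β
             - ∑ k ∈ Finset.range (n + 1),
                 ((n + 1).choose k) • ι ((br X ^ k) Y) (d ((L1 X ^ (n - k)) α))) := by
  intro n
  induction n with
  | zero =>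
    intro X Y α β
    simp [dor, pow_succ, pow_zero]
  | succ n ih =>
    intro X Y α β
    rw [Function.iterate_succ_apply', ih X Y α β]
    have key : ∀ (Z : V) (γ : Ω1),
        L1 X (ι Z (d γ)) = ι Z (d (L1 X γ)) + ι (br X Z) (d γ) := by
      intro Z γ
      have h := hLι X Z (d γ)
      rw [hdL X γ]
      rw [sub_eq_iff_eq_add] at h
      rw [h]; abel
    refine Prod.ext ?_ ?_
    · show br X ((br X ^ (n + 1)) Y) = (br X ^ (n + 1 + 1)) Y
      rw [pow_succ' (br X) (n + 1), Module.End.mul_apply]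
    · show L1 X ((L1 X ^ (n + 1)) β - _) - ι ((br X ^ (n + 1)) Y) (d α) = _
      have hL : L1 X ((L1 X ^ (n + 1)) β) = (L1 X ^ (n + 1 + 1)) β := by
        rw [pow_succ' (L1 X) (n + 1), Module.End.mul_apply]
      rw [map_sub, hL, map_sum]
      have hterm : ∀ k ∈ Finset.range (n + 1),
          L1 X ((n + 1).choose k • ι ((br X ^ k) Y) (d ((L1 X ^ (n - k)) α)))
            = (n + 1).choose k • ι ((br X ^ k) Y) (d ((L1 X ^ (n + 1 - k)) α))
              + (n + 1).choose k • ι ((br X ^ (k + 1)) Y) (d ((L1 X ^ (n - k)) α)) := by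
        intro k hk
        rw [Finset.mem_range] at hk
        have h1 : L1 X ((L1 X ^ (n - k)) α) = (L1 X ^ (n + 1 - k)) α := by
          rw [show n + 1 - k = (n - k) + 1 by omega, pow_succ' (L1 X) (n - k),
            Module.End.mul_apply]
        have h2 : br X ((br X ^ k) Y) = (br X ^ (k + 1)) Y := by
          rw [pow_succ' (br X) k, Module.End.mul_apply]
        rw [map_nsmul, key, h1, h2, smul_add]
      rw [Finset.sum_congr rfl hterm, Finset.sum_add_distrib]
      have hsum : (∑ k ∈ Finset.range (n + 1 + 1),
            (n + 1 + 1).choose k • ι ((br X ^ k) Y) (d ((L1 X ^ (n + 1 - k)) α)))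
          = (∑ k ∈ Finset.range (n + 1),
              (n + 1).choose k • ι ((br X ^ k) Y) (d ((L1 X ^ (n + 1 - k)) α)))
            + (∑ k ∈ Finset.range (n + 1),
              (n + 1).choose k • ι ((br X ^ (k + 1)) Y) (d ((L1 X ^ (n - k)) α)))
            + ι ((br X ^ (n + 1)) Y) (d α) := by
        have e1 := Finset.sum_range_succ' (fun k =>
          (n + 1 + 1).choose k • ι ((br X ^ k) Y) (d ((L1 X ^ (n + 1 - k)) α))) (n + 1)
        have e2 := Finset.sum_range_succ' (fun k =>
          (n + 1).choose k • ι ((br X ^ k) Y) (d ((L1 X ^ (n + 1 - k)) α))) n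
        have hc : ∀ k ∈ Finset.range (n + 1),
            (n + 1 + 1).choose (k + 1) • ι ((br X ^ (k + 1)) Y) (d ((L1 X ^ (n + 1 - (k + 1))) α))
              = (n + 1).choose (k + 1) • ι ((br X ^ (k + 1)) Y) (d ((L1 X ^ (n - k)) α))
                + (n + 1).choose k • ι ((br X ^ (k + 1)) Y) (d ((L1 X ^ (n - k)) α)) := by
          intro k hk
          rw [show n + 1 - (k + 1) = n - k from Nat.succ_sub_succ n k,
            Nat.choose_succ_succ, add_smul, add_comm]
        have e4 : (∑ k ∈ Finset.range (n + 1),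
            (n + 1).choose (k + 1) • ι ((br X ^ (k + 1)) Y) (d ((L1 X ^ (n - k)) α)))
            = (∑ k ∈ Finset.range n,
              (n + 1).choose (k + 1) • ι ((br X ^ (k + 1)) Y) (d ((L1 X ^ (n - k)) α)))
              + ι ((br X ^ (n + 1)) Y) (d α) := by
          rw [Finset.sum_range_succ (fun k =>
            (n + 1).choose (k + 1) • ι ((br X ^ (k + 1)) Y) (d ((L1 X ^ (n - k)) α))) n,
            Nat.choose_self, Nat.sub_self, pow_zero, one_smul, Module.End.one_apply]
        have e5 : ∀ k ∈ Finset.range n,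
            (n + 1).choose (k + 1) • ι ((br X ^ (k + 1)) Y) (d ((L1 X ^ (n + 1 - (k + 1))) α))
              = (n + 1).choose (k + 1) • ι ((br X ^ (k + 1)) Y) (d ((L1 X ^ (n - k)) α)) := by
          intro k hk
          rw [Nat.succ_sub_succ]
        rw [e1, Finset.sum_congr rfl hc, Finset.sum_add_distrib, e4, e2,
          Finset.sum_congr rfl e5]
        simp only [Nat.choose_zero_right, one_smul, Nat.sub_zero]
        abel
      rw [hsum, sub_sub]
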